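/- Let h(z) = exp(-(1+z)/(1-z)) be the atomic singular inner function on the unit disk 𝔻. Then u₁(z) = log(1/((1-|z|²)|h(z)|)) is a C² solution on 𝔻 of Δu = 4|h(z)|² e^{2u}, and u₁(z) → +∞ as z approaches any point of the unit circle. -/

import Mathlib

/-!
On the disk, `u₁ = -log (1 - |z|²) - log |h|`. The second term is harmonic because `h` is
holomorphic and zero-free, and the first is the potential of the Poincaré metric, whose
Laplacian `4 / (1 - |z|²)²` is exactly `4 |h|² e^{2u₁}`. Since `h` maps the disk into itself,
`-log |h| ≥ 0`, so `u₁ ≥ -log (1 - |z|²)`, which tends to `+∞` at the unit circle.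
-/

open Complex

/-- Euclidean Laplacian of a real-valued function on `ℂ`. -/
noncomputable def lap (u : ℂ → ℝ) (z : ℂ) : ℝ :=
  fderiv ℝ (fun w => fderiv ℝ u w 1) z 1 + fderiv ℝ (fun w => fderiv ℝ u w Complex.I) z Complex.I

open Filter Topology Metric Laplacian InnerProductSpace
open scoped RealInnerProductSpace

theorem iteratedFDeriv_two_apply_eq_fderiv_fderiv_apply {𝕜 E F : Type*}
    [NontriviallyNormedField 𝕜] [NormedAddCommGroup E] [NormedSpace 𝕜 E]
    [NormedAddCommGroup F] [NormedSpace 𝕜 F] {f : E → F} {x : E}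
    (hf : DifferentiableAt 𝕜 (fderiv 𝕜 f) x) (v w : E) :
    iteratedFDeriv 𝕜 2 f x ![v, w] = fderiv 𝕜 (fun y => fderiv 𝕜 f y w) x v := by
  rw [iteratedFDeriv_two_apply, fderiv_clm_apply hf (differentiableAt_const w)]
  simp

theorem ContDiffAt.differentiableAt_fderiv {𝕜 E F : Type*}
    [NontriviallyNormedField 𝕜] [NormedAddCommGroup E] [NormedSpace 𝕜 E]
    [NormedAddCommGroup F] [NormedSpace 𝕜 F] {f : E → F} {x : E}
    (hf : ContDiffAt 𝕜 2 f x) : DifferentiableAt 𝕜 (fderiv 𝕜 f) x :=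
  (hf.fderiv_right (m := 1) le_rfl).differentiableAt one_ne_zero

theorem lap_eq_laplacian {u : ℂ → ℝ} {z : ℂ} (hu : ContDiffAt ℝ 2 u z) :
    lap u z = Δ u z := by
  have hu' := hu.differentiableAt_fderiv
  simp only [laplacian_eq_iteratedFDeriv_complexPlane, lap,
    iteratedFDeriv_two_apply_eq_fderiv_fderiv_apply hu']

theorem one_sub_norm_sq_pos {E : Type*} [SeminormedAddCommGroup E] {x : E} (hx : ‖x‖ < 1) :
    0 < 1 - ‖x‖ ^ 2 :=
  sub_pos.2 (pow_lt_one₀ (norm_nonneg x) hx two_ne_zero)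

theorem one_sub_ne_zero_of_norm_lt_one {R : Type*} [NormedRing R] [NormOneClass R] {x : R}
    (hx : ‖x‖ < 1) : 1 - x ≠ 0 :=
  sub_ne_zero.2 fun h => by simp [← h] at hx

section
variable {E : Type*} [NormedAddCommGroup E] [InnerProductSpace ℝ E] {x : E}

theorem hasFDerivAt_neg_log_one_sub_norm_sq (hx : ‖x‖ < 1) :
    HasFDerivAt (fun y : E => -Real.log (1 - ‖y‖ ^ 2))
      ((2 / (1 - ‖x‖ ^ 2)) • innerSL ℝ x) x := by
  refine (((hasStrictFDerivAt_norm_sq x).hasFDerivAt.const_sub 1).log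
    (one_sub_norm_sq_pos hx).ne').fun_neg.congr_fderiv ?_
  ext v
  simp only [smul_apply, smul_neg, neg_neg, coe_innerSL_apply, smul_eq_mul,
    nsmul_eq_mul, Nat.cast_ofNat]
  ring

theorem contDiffAt_neg_log_one_sub_norm_sq {n : WithTop ℕ∞} (hx : ‖x‖ < 1) :
    ContDiffAt ℝ n (fun y : E => -Real.log (1 - ‖y‖ ^ 2)) x := by
  exact ((contDiffAt_const.sub (contDiff_norm_sq ℝ).contDiffAt).log
    (one_sub_norm_sq_pos hx).ne').neg

theorem iteratedFDeriv_two_neg_log_one_sub_norm_sq (hx : ‖x‖ < 1) (v : E) :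
    iteratedFDeriv ℝ 2 (fun y : E => -Real.log (1 - ‖y‖ ^ 2)) x ![v, v] =
      2 * ‖v‖ ^ 2 / (1 - ‖x‖ ^ 2) + 4 * ⟪x, v⟫ ^ 2 / (1 - ‖x‖ ^ 2) ^ 2 := by
  have hpos : 0 < 1 - ‖x‖ ^ 2 := one_sub_norm_sq_pos hx
  rw [iteratedFDeriv_two_apply_eq_fderiv_fderiv_apply
    (contDiffAt_neg_log_one_sub_norm_sq hx).differentiableAt_fderiv]
  have hdir : (fun y => fderiv ℝ (fun y : E => -Real.log (1 - ‖y‖ ^ 2)) y v) =ᶠ[𝓝 x]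
      fun y => 2 * ⟪v, y⟫ * (1 - ‖y‖ ^ 2)⁻¹ := by
    filter_upwards [isOpen_ball.mem_nhds (mem_ball_zero_iff.2 hx)] with y hy
    rw [(hasFDerivAt_neg_log_one_sub_norm_sq (mem_ball_zero_iff.1 hy)).fderiv]
    simp only [smul_apply, coe_innerSL_apply, real_inner_comm, smul_eq_mul]
    ring
  have hnum : HasFDerivAt (fun y => 2 * ⟪v, y⟫) _ x :=
    (innerSL ℝ v).hasFDerivAt.const_mul 2
  have hden : HasFDerivAt (fun y : E => (1 - ‖y‖ ^ 2)⁻¹) _ x :=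
    (hasDerivAt_inv hpos.ne').comp_hasFDerivAt x
      ((hasStrictFDerivAt_norm_sq x).hasFDerivAt.const_sub 1)
  rw [hdir.fderiv_eq, (hnum.fun_mul hden).fderiv]
  simp only [add_apply, smul_apply, coe_innerSL_apply,
    real_inner_comm, real_inner_self_eq_norm_sq, smul_neg, neg_smul, neg_neg, nsmul_eq_mul,
    Nat.cast_ofNat, smul_eq_mul]
  field_simp
  ring

theorem laplacian_neg_log_one_sub_norm_sq [FiniteDimensional ℝ E] (hx : ‖x‖ < 1) :
    Δ (fun y : E => -Real.log (1 - ‖y‖ ^ 2)) x =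
      2 * Module.finrank ℝ E / (1 - ‖x‖ ^ 2) + 4 * ‖x‖ ^ 2 / (1 - ‖x‖ ^ 2) ^ 2 := by
  set b := stdOrthonormalBasis ℝ E
  simp only [laplacian_eq_iteratedFDeriv_orthonormalBasis _ b,
    iteratedFDeriv_two_neg_log_one_sub_norm_sq hx, b.orthonormal.1, Finset.sum_add_distrib,
    ← Finset.sum_div, ← Finset.mul_sum, b.sum_sq_inner_left]
  simp

end

theorem tendsto_neg_log_one_sub_norm_sq {E : Type*} [NormedAddCommGroup E] {ξ : E}
    (hξ : ‖ξ‖ = 1) :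
    Tendsto (fun x : E => -Real.log (1 - ‖x‖ ^ 2)) (𝓝[ball 0 1] ξ) atTop := by
  have hlim : Tendsto (fun x : E => 1 - ‖x‖ ^ 2) (𝓝[ball 0 1] ξ) (𝓝[>] 0) := by
    refine tendsto_nhdsWithin_of_tendsto_nhds_of_eventually_within _ ?_ ?_
    · have hcont : Continuous fun x : E => 1 - ‖x‖ ^ 2 := by fun_prop
      simpa [hξ] using (hcont.tendsto ξ).mono_left nhdsWithin_le_nhds
    · filter_upwards [self_mem_nhdsWithin] with x hx
      exact one_sub_norm_sq_pos (mem_ball_zero_iff.1 hx)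
  exact tendsto_neg_atBot_atTop.comp (Real.tendsto_log_nhdsGT_zero.comp hlim)

theorem laplacian_neg_log_one_sub_norm_sq_complex {z : ℂ} (hz : ‖z‖ < 1) :
    Δ (fun w : ℂ => -Real.log (1 - ‖w‖ ^ 2)) z = 4 / (1 - ‖z‖ ^ 2) ^ 2 := by
  have hpos : 0 < 1 - ‖z‖ ^ 2 := one_sub_norm_sq_pos hz
  rw [laplacian_neg_log_one_sub_norm_sq hz, Complex.finrank_real_complex]
  field_simp
  ring

theorem re_one_add_div_one_sub (z : ℂ) :
    ((1 + z) / (1 - z)).re = (1 - ‖z‖ ^ 2) / ‖1 - z‖ ^ 2 := by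
  rw [Complex.div_re, ← add_div, Complex.sq_norm, Complex.sq_norm, Complex.normSq_apply,
    Complex.normSq_apply]
  simp only [add_re, add_im, sub_re, sub_im, one_re, one_im]
  ring

theorem norm_exp_neg_one_add_div_one_sub_lt_one {z : ℂ} (hz : ‖z‖ < 1) :
    ‖Complex.exp (-(1 + z) / (1 - z))‖ < 1 := by
  have hz1 := one_sub_ne_zero_of_norm_lt_one hz
  have hre : 0 < ((1 + z) / (1 - z)).re := by
    rw [re_one_add_div_one_sub]
    have : 0 < 1 - ‖z‖ ^ 2 := one_sub_norm_sq_pos hz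
    positivity
  rw [Complex.norm_exp, neg_div, Complex.neg_re, Real.exp_lt_one_iff]
  linarith

theorem harmonicAt_log_norm_exp_neg_one_add_div_one_sub {z : ℂ} (hz : ‖z‖ < 1) :
    HarmonicAt (fun w => Real.log ‖Complex.exp (-(1 + w) / (1 - w))‖) z := by
  have hz1 := one_sub_ne_zero_of_norm_lt_one hz
  exact AnalyticAt.harmonicAt_log_norm (by fun_prop (disch := exact hz1)) (Complex.exp_ne_zero _)

theorem sq_mul_exp_two_mul_log_one_div_mul {a b : ℝ} (ha : 0 < a) (hb : 0 < b) :
    b ^ 2 * Real.exp (2 * Real.log (1 / (a * b))) = 1 / a ^ 2 := by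
  rw [two_mul, Real.exp_add, Real.exp_log (by positivity)]
  field_simp

theorem singular_inner_solution_one
    (h : ℂ → ℂ) (hdef : ∀ z, h z = Complex.exp (-(1 + z) / (1 - z)))
    (u₁ : ℂ → ℝ)
    (hu₁ : ∀ z, u₁ z = Real.log (1 / ((1 - (‖z‖)^2) * ‖h z‖))) :
    ContDiffOn ℝ 2 u₁ (Metric.ball (0:ℂ) 1) ∧
    (∀ z ∈ Metric.ball (0:ℂ) 1,
      lap u₁ z = 4 * (‖h z‖)^2 * Real.exp (2 * u₁ z)) ∧
    (∀ ξ : ℂ, ‖ξ‖ = 1 →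
      Filter.Tendsto u₁ (nhdsWithin ξ (Metric.ball (0:ℂ) 1)) Filter.atTop) := by
  have hh : h = fun z => Complex.exp (-(1 + z) / (1 - z)) := funext hdef
  have hsplit : ∀ z ∈ ball (0 : ℂ) 1,
      u₁ z = -Real.log (1 - ‖z‖ ^ 2) - Real.log ‖h z‖ := by
    intro z hz
    rw [hu₁, one_div, Real.log_inv,
      Real.log_mul (one_sub_norm_sq_pos (mem_ball_zero_iff.1 hz)).ne' (by simp [hh])]
    ring
  have hlocal : ∀ z ∈ ball (0 : ℂ) 1,
      u₁ =ᶠ[𝓝 z] (fun w : ℂ => -Real.log (1 - ‖w‖ ^ 2)) - (Real.log ‖h ·‖) :=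
    fun z hz => eventually_of_mem (isOpen_ball.mem_nhds hz) hsplit
  have hharm : ∀ z ∈ ball (0 : ℂ) 1, HarmonicAt (Real.log ‖h ·‖) z := fun z hz =>
    hh ▸ harmonicAt_log_norm_exp_neg_one_add_div_one_sub (mem_ball_zero_iff.1 hz)
  have hC2 : ∀ z ∈ ball (0 : ℂ) 1, ContDiffAt ℝ 2 u₁ z := fun z hz =>
    ((contDiffAt_neg_log_one_sub_norm_sq (mem_ball_zero_iff.1 hz)).sub
      (hharm z hz).1).congr_of_eventuallyEq (hlocal z hz)
  refine ⟨fun z hz => (hC2 z hz).contDiffWithinAt, fun z hz => ?_, fun ξ hξ => ?_⟩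
  · have hz' := mem_ball_zero_iff.1 hz
    rw [lap_eq_laplacian (hC2 z hz), (laplacian_congr_nhds (hlocal z hz)).eq_of_nhds,
      (contDiffAt_neg_log_one_sub_norm_sq hz').laplacian_sub (hharm z hz).1,
      laplacian_neg_log_one_sub_norm_sq_complex hz', (hharm z hz).2.eq_of_nhds, hu₁, mul_assoc,
      sq_mul_exp_two_mul_log_one_div_mul (one_sub_norm_sq_pos hz') (by simp [hh])]
    rw [Pi.zero_apply, sub_zero, mul_one_div]
  · refine tendsto_atTop_mono' _ ?_ (tendsto_neg_log_one_sub_norm_sq hξ)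
    filter_upwards [self_mem_nhdsWithin] with z hz
    have hle : Real.log ‖h z‖ ≤ 0 := Real.log_nonpos (norm_nonneg _)
      (hdef z ▸ (norm_exp_neg_one_add_div_one_sub_lt_one (mem_ball_zero_iff.1 hz)).le)
    linarith [hsplit z hz]
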